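/- arXiv:math/0610589 — 2 statements merged into one kernel-verified Lean document; each statement's English description precedes it below -/
import Mathlib

section
/- Let f : ℂ → ℂ^N be holomorphic and nowhere vanishing, and suppose P₊f is also nowhere vanishing. Then for every ζ ∈ ℂ one has ∂̄(P₊f)(ζ) = − f(ζ) · |P₊f(ζ)|² / |f(ζ)|². -/
open Complex Matrix

/-- Wirtinger derivative ∂ = (∂/∂ζ₁ − i ∂/∂ζ₂)/2 of a map ℂ → ℂ. -/
noncomputable def wD (f : ℂ → ℂ) (z : ℂ) : ℂ :=
  (fderiv ℝ f z 1 - Complex.I * fderiv ℝ f z Complex.I) / 2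

/-- Anti-Wirtinger derivative ∂̄ = (∂/∂ζ₁ + i ∂/∂ζ₂)/2 of a map ℂ → ℂ. -/
noncomputable def wDbar (f : ℂ → ℂ) (z : ℂ) : ℂ :=
  (fderiv ℝ f z 1 + Complex.I * fderiv ℝ f z Complex.I) / 2

/-- Componentwise Wirtinger derivative for vector-valued maps. -/
noncomputable def wDV {N : ℕ} (f : ℂ → Fin N → ℂ) (z : ℂ) : Fin N → ℂ :=
  fun i => wD (fun w => f w i) z

/-- Componentwise anti-Wirtinger derivative for vector-valued maps. -/
noncomputable def wDbarV {N : ℕ} (f : ℂ → Fin N → ℂ) (z : ℂ) : Fin N → ℂ :=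
  fun i => wDbar (fun w => f w i) z

/-- Hermitian inner product a†·b = Σᵢ āᵢ bᵢ on ℂ^N. -/
noncomputable def herm {N : ℕ} (a b : Fin N → ℂ) : ℂ :=
  ∑ i, (starRingEnd ℂ) (a i) * b i

/-- Squared norm |a|² as a real number. -/
noncomputable def nsq {N : ℕ} (a : Fin N → ℂ) : ℝ :=
  ∑ i, Complex.normSq (a i)

/-- The operator P₊ g = ∂g − g (g†·∂g)/|g|². -/
noncomputable def Pp {N : ℕ} (g : ℂ → Fin N → ℂ) : ℂ → Fin N → ℂ :=
  fun z i => wDV g z i - g z i * (herm (g z) (wDV g z) / herm (g z) (g z))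

/-- Iterates of P₊ : P₊⁰ g = g, P₊^{k+1} g = P₊ (P₊^k g). -/
noncomputable def PpIter {N : ℕ} (g : ℂ → Fin N → ℂ) : ℕ → (ℂ → Fin N → ℂ)
  | 0 => g
  | k + 1 => Pp (PpIter g k)

/-- The projector P(V) = V ⊗ V† / |V|². -/
noncomputable def proj {N : ℕ} (V : ℂ → Fin N → ℂ) (z : ℂ) : Matrix (Fin N) (Fin N) ℂ :=
  fun i j => V z i * (starRingEnd ℂ) (V z j) / herm (V z) (V z)

/-- Entrywise Wirtinger derivative for matrix-valued maps. -/
noncomputable def wDM {N : ℕ} (M : ℂ → Matrix (Fin N) (Fin N) ℂ) (z : ℂ) :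
    Matrix (Fin N) (Fin N) ℂ :=
  fun i j => wD (fun w => M w i j) z

/-- Entrywise anti-Wirtinger derivative for matrix-valued maps. -/
noncomputable def wDbarM {N : ℕ} (M : ℂ → Matrix (Fin N) (Fin N) ℂ) (z : ℂ) :
    Matrix (Fin N) (Fin N) ℂ :=
  fun i j => wDbar (fun w => M w i j) z


lemma fderiv_real_of_hol {g : ℂ → ℂ} {z : ℂ} (hg : DifferentiableAt ℂ g z) (c : ℂ) :
    fderiv ℝ g z c = c * deriv g z := by
  rw [(hg.hasFDerivAt.restrictScalars ℝ).fderiv, ContinuousLinearMap.coe_restrictScalars']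
  calc fderiv ℂ g z c = fderiv ℂ g z (c • 1) := by rw [smul_eq_mul, mul_one]
    _ = c • fderiv ℂ g z 1 := map_smul _ _ _
    _ = c * deriv g z := rfl

lemma wDbar_of_hol {g : ℂ → ℂ} {z : ℂ} (hg : DifferentiableAt ℂ g z) : wDbar g z = 0 := by
  rw [wDbar, fderiv_real_of_hol hg, fderiv_real_of_hol hg]
  have := Complex.I_mul_I
  field_simp
  linear_combination deriv g z * this

lemma wD_of_hol {g : ℂ → ℂ} {z : ℂ} (hg : DifferentiableAt ℂ g z) : wD g z = deriv g z := by
  rw [wD, fderiv_real_of_hol hg, fderiv_real_of_hol hg]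
  have := Complex.I_mul_I
  field_simp
  linear_combination -deriv g z * this

lemma conj_hasFDerivAt {g : ℂ → ℂ} {z : ℂ} (hg : DifferentiableAt ℂ g z) :
    HasFDerivAt (fun w => (starRingEnd ℂ) (g w))
      ((Complex.conjCLE.toContinuousLinearMap).comp
        ((fderiv ℂ g z).restrictScalars ℝ)) z :=
  (Complex.conjCLE.toContinuousLinearMap.hasFDerivAt).comp z
    (hg.hasFDerivAt.restrictScalars ℝ)

lemma diff_conj {g : ℂ → ℂ} {z : ℂ} (hg : DifferentiableAt ℂ g z) :
    DifferentiableAt ℝ (fun w => (starRingEnd ℂ) (g w)) z :=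
  (conj_hasFDerivAt hg).differentiableAt

lemma wDbar_conj {g : ℂ → ℂ} {z : ℂ} (hg : DifferentiableAt ℂ g z) :
    wDbar (fun w => (starRingEnd ℂ) (g w)) z = (starRingEnd ℂ) (deriv g z) := by
  rw [wDbar, (conj_hasFDerivAt hg).fderiv]
  have h1 : ∀ c : ℂ, ((Complex.conjCLE.toContinuousLinearMap).comp
      ((fderiv ℂ g z).restrictScalars ℝ)) c = (starRingEnd ℂ) (c * deriv g z) := by
    intro c
    have h2 : fderiv ℂ g z c = c * deriv g z := by
      calc fderiv ℂ g z c = fderiv ℂ g z (c • 1) := by rw [smul_eq_mul, mul_one]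
        _ = c • fderiv ℂ g z 1 := map_smul _ _ _
        _ = c * deriv g z := rfl
    simp only [ContinuousLinearMap.coe_comp', Function.comp_apply,
      ContinuousLinearMap.coe_restrictScalars', h2]
    rfl
  rw [h1, h1]
  simp only [_root_.map_mul, Complex.conj_I, one_mul, _root_.map_one]
  have := Complex.I_mul_I
  linear_combination (-(starRingEnd ℂ) (deriv g z)/2) * this

lemma wDbar_mul {u v : ℂ → ℂ} {z : ℂ} (hu : DifferentiableAt ℝ u z)
    (hv : DifferentiableAt ℝ v z) :
    wDbar (fun w => u w * v w) z = u z * wDbar v z + v z * wDbar u z := by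
  simp only [wDbar, fderiv_fun_mul hu hv, ContinuousLinearMap.add_apply,
    ContinuousLinearMap.smul_apply, smul_eq_mul]
  ring

lemma wDbar_sub {u v : ℂ → ℂ} {z : ℂ} (hu : DifferentiableAt ℝ u z)
    (hv : DifferentiableAt ℝ v z) :
    wDbar (fun w => u w - v w) z = wDbar u z - wDbar v z := by
  simp only [wDbar, fderiv_fun_sub hu hv, ContinuousLinearMap.sub_apply]
  ring

lemma wDbar_sum {ι : Type*} {s : Finset ι} {u : ι → ℂ → ℂ} {z : ℂ}
    (hu : ∀ i ∈ s, DifferentiableAt ℝ (u i) z) :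
    wDbar (fun w => ∑ i ∈ s, u i w) z = ∑ i ∈ s, wDbar (u i) z := by
  simp only [wDbar, fderiv_fun_sum hu, ContinuousLinearMap.sum_apply]
  rw [Finset.mul_sum, ← Finset.sum_add_distrib, ← Finset.sum_div]

lemma wDbar_inv {v : ℂ → ℂ} {z : ℂ} (hv : DifferentiableAt ℝ v z) (h0 : v z ≠ 0) :
    wDbar (fun w => (v w)⁻¹) z = -(wDbar v z) / (v z)^2 := by
  have hvi : DifferentiableAt ℝ (fun w => (v w)⁻¹) z := hv.inv h0
  have hone : wDbar (fun w => v w * (v w)⁻¹) z = 0 := by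
    have h : (fun w : ℂ => v w * (v w)⁻¹) =ᶠ[nhds z] (fun _ => 1) := by
      have hvne : ∀ᶠ w in nhds z, v w ≠ 0 := hv.continuousAt.eventually_ne h0
      filter_upwards [hvne] with w hw; exact mul_inv_cancel₀ hw
    have h2 : fderiv ℝ (fun w : ℂ => v w * (v w)⁻¹) z = fderiv ℝ (fun _ : ℂ => (1:ℂ)) z :=
      Filter.EventuallyEq.fderiv_eq h
    simp [wDbar, h2]
  rw [wDbar_mul hv hvi] at hone
  set W := wDbar (fun w => (v w)⁻¹) z with hW
  field_simp at hone ⊢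
  linear_combination hone


/-- For holomorphic nowhere-vanishing `f` with `P₊f` nowhere vanishing,
`∂̄(P₊f)(ζ) = − f(ζ) · |P₊f(ζ)|² / |f(ζ)|²`. -/
theorem stmt_0 {N : ℕ} (f : ℂ → Fin N → ℂ)
    (hf : ∀ i, Differentiable ℂ fun z => f z i)
    (hf0 : ∀ z, f z ≠ 0) (hPf0 : ∀ z, Pp f z ≠ 0) :
    ∀ ζ : ℂ, wDbarV (Pp f) ζ =
      fun i => -(f ζ i) * (herm (Pp f ζ) (Pp f ζ) / herm (f ζ) (f ζ)) := by
  intro ζ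
  -- derivative of each component is entire
  have hdg : ∀ j, Differentiable ℂ (deriv (fun w => f w j)) := by
    intro j
    exact analyticOnNhd_univ_iff_differentiable.mp
      ((analyticOnNhd_univ_iff_differentiable.mpr (hf j)).deriv)
  -- wDV is deriv
  have hwDV : ∀ w, wDV f w = fun j => deriv (fun x => f x j) w := by
    intro w; funext j; exact wD_of_hol ((hf j) w)
  set Gf : ℂ → ℂ := fun w => ∑ j, (starRingEnd ℂ) (f w j) * deriv (fun x => f x j) w with hGf
  set Hf : ℂ → ℂ := fun w => ∑ j, (starRingEnd ℂ) (f w j) * f w j with hHf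
  -- H never vanishes
  have hH0 : ∀ w, Hf w ≠ 0 := by
    intro w
    have h1 : Hf w = ((∑ j, Complex.normSq (f w j) : ℝ) : ℂ) := by
      simp only [hHf]
      push_cast
      exact Finset.sum_congr rfl fun j _ => by
        rw [← Complex.normSq_eq_conj_mul_self]
    rw [h1]
    intro hc
    have h2 : (∑ j, Complex.normSq (f w j) : ℝ) = 0 := by exact_mod_cast hc
    have h3 : ∀ j ∈ Finset.univ, Complex.normSq (f w j) = 0 := by
      intro j _
      exact (Finset.sum_eq_zero_iff_of_nonneg (fun j _ => Complex.normSq_nonneg _)).mp h2 j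
        (Finset.mem_univ j)
    exact hf0 w (funext fun j => Complex.normSq_eq_zero.mp (h3 j (Finset.mem_univ j)))
  -- Pp components
  have hPfun : ∀ i, (fun w => Pp f w i) =
      (fun w => deriv (fun x => f x i) w - f w i * (Gf w * (Hf w)⁻¹)) := by
    intro i; funext w
    simp only [Pp, hwDV w, herm, hGf, hHf, div_eq_mul_inv]
  -- differentiability of pieces at ζ
  have hdF : ∀ j, DifferentiableAt ℝ (fun w => f w j) ζ := fun j => ((hf j) ζ).restrictScalars ℝ
  have hdD : ∀ j, DifferentiableAt ℝ (deriv (fun w => f w j)) ζ :=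
    fun j => ((hdg j) ζ).restrictScalars ℝ
  have hdC : ∀ j, DifferentiableAt ℝ (fun w => (starRingEnd ℂ) (f w j)) ζ :=
    fun j => diff_conj ((hf j) ζ)
  have hdG : DifferentiableAt ℝ Gf ζ := by
    apply DifferentiableAt.fun_sum; intro j _; exact (hdC j).mul (hdD j)
  have hdH : DifferentiableAt ℝ Hf ζ := by
    apply DifferentiableAt.fun_sum; intro j _; exact (hdC j).mul (hdF j)
  have hdHinv : DifferentiableAt ℝ (fun w => (Hf w)⁻¹) ζ := hdH.inv (hH0 ζ)
  have hdGH : DifferentiableAt ℝ (fun w => Gf w * (Hf w)⁻¹) ζ := hdG.mul hdHinv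
  -- wDbar computations
  have hbF : ∀ j, wDbar (fun w => f w j) ζ = 0 := fun j => wDbar_of_hol ((hf j) ζ)
  have hbD : ∀ j, wDbar (deriv (fun w => f w j)) ζ = 0 := fun j => wDbar_of_hol ((hdg j) ζ)
  have hbC : ∀ j, wDbar (fun w => (starRingEnd ℂ) (f w j)) ζ =
      (starRingEnd ℂ) (deriv (fun w => f w j) ζ) := fun j => wDbar_conj ((hf j) ζ)
  set F : Fin N → ℂ := fun j => f ζ j with hF
  set D : Fin N → ℂ := fun j => deriv (fun x => f x j) ζ with hD
  have hbG : wDbar Gf ζ = ∑ j, D j * (starRingEnd ℂ) (D j) := by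
    rw [hGf, wDbar_sum (fun j _ => (hdC j).fun_mul (hdD j))]
    exact Finset.sum_congr rfl fun j _ => by
      rw [wDbar_mul (hdC j) (hdD j), hbD j, hbC j]; ring
  have hbH : wDbar Hf ζ = ∑ j, F j * (starRingEnd ℂ) (D j) := by
    rw [hHf, wDbar_sum (fun j _ => (hdC j).fun_mul (hdF j))]
    exact Finset.sum_congr rfl fun j _ => by
      rw [wDbar_mul (hdC j) (hdF j), hbF j, hbC j]; ring
  have hbHinv : wDbar (fun w => (Hf w)⁻¹) ζ = -(wDbar Hf ζ) / (Hf ζ)^2 :=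
    wDbar_inv hdH (hH0 ζ)
  -- assemble LHS
  funext i
  have hLHS : wDbarV (Pp f) ζ i =
      - (F i * (Gf ζ * (-(∑ j, F j * (starRingEnd ℂ) (D j)) / (Hf ζ)^2)
          + (Hf ζ)⁻¹ * (∑ j, D j * (starRingEnd ℂ) (D j)))) := by
    show wDbar (fun w => Pp f w i) ζ = _
    rw [hPfun i, wDbar_sub (hdD i) ((hdF i).fun_mul hdGH), hbD i,
      wDbar_mul (hdF i) hdGH, wDbar_mul hdG hdHinv, hbHinv, hbG, hbH, hbF i]
    ring
  rw [hLHS]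
  -- RHS : herm expansion
  set G : ℂ := Gf ζ with hGz
  set H : ℂ := Hf ζ with hHz
  have hGval : herm (f ζ) (wDV f ζ) = G := by
    rw [hwDV ζ]; simp only [herm, hGz, hGf]
  have hHval : herm (f ζ) (f ζ) = H := by simp only [herm, hHz, hHf]
  have hGval2 : herm (f ζ) (fun j => deriv (fun x => f x j) ζ) = G := by
    simp only [herm, hGz, hGf]
  have hPz : ∀ j, Pp f ζ j = D j - F j * (G / H) := by
    intro j; simp only [Pp, hwDV ζ, hGval2, hHval]; rfl
  set A : ℂ := ∑ j, D j * (starRingEnd ℂ) (D j) with hA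
  set B : ℂ := ∑ j, F j * (starRingEnd ℂ) (D j) with hB
  have hHerm : herm (Pp f ζ) (Pp f ζ) =
      (∑ j, (starRingEnd ℂ) (D j) * D j)
      - (G / H) * (∑ j, (starRingEnd ℂ) (D j) * F j)
      - ((starRingEnd ℂ) G / (starRingEnd ℂ) H) * (∑ j, (starRingEnd ℂ) (F j) * D j)
      + (((starRingEnd ℂ) G / (starRingEnd ℂ) H) * (G / H)) *
          (∑ j, (starRingEnd ℂ) (F j) * F j) := by
    rw [herm]
    rw [show (∑ j, (starRingEnd ℂ) (Pp f ζ j) * Pp f ζ j) =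
        ∑ j, ((starRingEnd ℂ) (D j) * D j
          - (G / H) * ((starRingEnd ℂ) (D j) * F j)
          - ((starRingEnd ℂ) G / (starRingEnd ℂ) H) * ((starRingEnd ℂ) (F j) * D j)
          + (((starRingEnd ℂ) G / (starRingEnd ℂ) H) * (G / H)) *
              ((starRingEnd ℂ) (F j) * F j)) from
      Finset.sum_congr rfl fun j _ => by
        rw [hPz j]; simp only [_root_.map_sub, _root_.map_mul, map_div₀]; ring]
    simp only [Finset.sum_add_distrib, Finset.sum_sub_distrib, ← Finset.mul_sum]
  have hGsum : (∑ j, (starRingEnd ℂ) (F j) * D j) = G := by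
    simp only [hGz, hGf]; rfl
  have hHsum : (∑ j, (starRingEnd ℂ) (F j) * F j) = H := by
    simp only [hHz, hHf]; rfl
  have hAsum : (∑ j, (starRingEnd ℂ) (D j) * D j) = A := by
    rw [hA]; exact Finset.sum_congr rfl fun j _ => mul_comm _ _
  have hBsum : (∑ j, (starRingEnd ℂ) (D j) * F j) = B := by
    rw [hB]; exact Finset.sum_congr rfl fun j _ => mul_comm _ _
  rw [hHerm, hHval, hGsum, hHsum, hAsum, hBsum]
  have hHne : H ≠ 0 := hH0 ζ
  have hHcne : (starRingEnd ℂ) H ≠ 0 := by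
    intro hc
    apply hHne
    have := congrArg (starRingEnd ℂ) hc
    simpa using this
  have hfF : f ζ i = F i := rfl
  rw [hfF]
  field_simp
  ring
end

section
/- Let f : ℂ → ℂ^N be holomorphic and nowhere vanishing, and suppose P₊f is also nowhere vanishing, so that P₊²f = P₊(P₊f) is defined. Then for every ζ ∈ ℂ the vector P₊²f(ζ) is orthogonal to f(ζ), i.e. (P₊²f(ζ))†·f(ζ) = 0. -/
open Complex Matrix

section Aux

lemma fderiv_real_of_holo (f : ℂ → ℂ) (hf : Differentiable ℂ f) (z v : ℂ) :
    fderiv ℝ f z v = v * deriv f z := by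
  have h := ((hf z).hasFDerivAt.restrictScalars ℝ).fderiv
  rw [h]
  simp only [ContinuousLinearMap.coe_restrictScalars']
  have : v = v • (1 : ℂ) := by simp
  rw [this, _root_.map_smul, fderiv_apply_one_eq_deriv]
  simp [smul_eq_mul]

lemma wD_eq_deriv (f : ℂ → ℂ) (hf : Differentiable ℂ f) (z : ℂ) :
    wD f z = deriv f z := by
  simp only [wD, fderiv_real_of_holo f hf, one_mul]
  have h : Complex.I * (Complex.I * deriv f z) = -deriv f z := by
    rw [← mul_assoc, Complex.I_mul_I]; ring
  rw [h]; ring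

lemma wDbar_eq_zero (f : ℂ → ℂ) (hf : Differentiable ℂ f) (z : ℂ) :
    wDbar f z = 0 := by
  simp only [wDbar, fderiv_real_of_holo f hf, one_mul]
  have h : Complex.I * (Complex.I * deriv f z) = -deriv f z := by
    rw [← mul_assoc, Complex.I_mul_I]; ring
  rw [h]; ring

lemma fderiv_conj_apply (f : ℂ → ℂ) (z v : ℂ) :
    fderiv ℝ (fun w => (starRingEnd ℂ) (f w)) z v = (starRingEnd ℂ) (fderiv ℝ f z v) := by
  have : (fun w => (starRingEnd ℂ) (f w)) = fun w => star (f w) := rfl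
  rw [this, fderiv_star]
  simp

lemma wD_conj (f : ℂ → ℂ) (z : ℂ) :
    wD (fun w => (starRingEnd ℂ) (f w)) z = (starRingEnd ℂ) (wDbar f z) := by
  simp only [wD, wDbar, fderiv_conj_apply, map_div₀, map_add, _root_.map_mul, Complex.conj_I,
    map_ofNat]
  ring

lemma wD_mul (f g : ℂ → ℂ) (z : ℂ) (hf : DifferentiableAt ℝ f z)
    (hg : DifferentiableAt ℝ g z) :
    wD (fun w => f w * g w) z = wD f z * g z + f z * wD g z := by
  simp only [wD, fderiv_fun_mul hf hg, ContinuousLinearMap.add_apply,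
    ContinuousLinearMap.smul_apply, smul_eq_mul]
  ring

lemma wD_sum {ι : Type*} (s : Finset ι) (f : ι → ℂ → ℂ) (z : ℂ)
    (hf : ∀ i ∈ s, DifferentiableAt ℝ (f i) z) :
    wD (fun w => ∑ i ∈ s, f i w) z = ∑ i ∈ s, wD (f i) z := by
  simp only [wD, fderiv_fun_sum hf, ContinuousLinearMap.sum_apply]
  rw [Finset.mul_sum, ← Finset.sum_sub_distrib, Finset.sum_div]

lemma wD_zero_fun (z : ℂ) : wD (fun _ => (0 : ℂ)) z = 0 := by
  simp [wD]

lemma herm_self_ne_zero {N : ℕ} (a : Fin N → ℂ) (ha : a ≠ 0) : herm a a ≠ 0 := by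
  have h : herm a a = ((∑ i, Complex.normSq (a i) : ℝ) : ℂ) := by
    rw [Complex.ofReal_sum]
    exact Finset.sum_congr rfl fun i _ => by
      rw [Complex.normSq_eq_conj_mul_self]
  rw [h]
  rw [Ne, Complex.ofReal_eq_zero]
  intro h0
  apply ha
  funext i
  have := (Finset.sum_eq_zero_iff_of_nonneg
    (fun j _ => Complex.normSq_nonneg (a j))).1 h0 i (Finset.mem_univ i)
  exact Complex.normSq_eq_zero.1 this

lemma herm_conj {N : ℕ} (a b : Fin N → ℂ) : herm a b = (starRingEnd ℂ) (herm b a) := by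
  simp only [herm, map_sum, _root_.map_mul, Complex.conj_conj]
  exact Finset.sum_congr rfl fun i _ => (mul_comm _ _)

lemma herm_Pp_expand {N : ℕ} (h : ℂ → Fin N → ℂ) (a : Fin N → ℂ) (z : ℂ) :
    herm a (Pp h z) = herm a (wDV h z)
      - (herm (h z) (wDV h z) / herm (h z) (h z)) * herm a (h z) := by
  simp only [Pp, herm, mul_sub, Finset.mul_sum]
  rw [← Finset.sum_sub_distrib]
  exact Finset.sum_congr rfl fun i _ => by ring

lemma herm_Pp_self {N : ℕ} (h : ℂ → Fin N → ℂ) (z : ℂ) (h0 : h z ≠ 0) :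
    herm (h z) (Pp h z) = 0 := by
  rw [herm_Pp_expand, div_mul_cancel₀ _ (herm_self_ne_zero (h z) h0), sub_self]

end Aux

/-- For holomorphic nowhere-vanishing `f` with `P₊f` nowhere vanishing,
`(P₊²f(ζ))†·f(ζ) = 0`. -/
theorem stmt_1 {N : ℕ} (f : ℂ → Fin N → ℂ)
    (hf : ∀ i, Differentiable ℂ fun z => f z i)
    (hf0 : ∀ z, f z ≠ 0) (hPf0 : ∀ z, Pp f z ≠ 0) :
    ∀ ζ : ℂ, herm (Pp (Pp f) ζ) (f ζ) = 0 := by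
  intro ζ
  set g := Pp f with hg
  -- differentiability facts
  have hfR : ∀ i, Differentiable ℝ fun z => f z i := fun i => (hf i).restrictScalars ℝ
  have hfc : ∀ i, Differentiable ℝ fun z => (starRingEnd ℂ) (f z i) := fun i => (hfR i).star
  have hd : ∀ i, Differentiable ℂ (deriv fun w => f w i) := fun i =>
    ((contDiff_infty_iff_deriv.mp ((hf i).contDiff)).2).differentiable (by simp)
  have hdR : ∀ i, Differentiable ℝ (deriv fun w => f w i) := fun i =>
    (hd i).restrictScalars ℝ
  have eDeriv : ∀ j z, wD (fun w => f w j) z = deriv (fun w => f w j) z :=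
    fun j z => wD_eq_deriv _ (hf j) z
  have hBne : ∀ z, (∑ j, (starRingEnd ℂ) (f z j) * f z j) ≠ 0 := fun z =>
    herm_self_ne_zero (f z) (hf0 z)
  -- each component of g is ℝ-differentiable
  have hgEq : ∀ i, (fun z => g z i) = fun z =>
      deriv (fun w => f w i) z - f z i *
        ((∑ j, (starRingEnd ℂ) (f z j) * deriv (fun w => f w j) z) /
         (∑ j, (starRingEnd ℂ) (f z j) * f z j)) := by
    intro i
    funext z
    simp only [hg, Pp, wDV, herm, eDeriv]
  have hgd : ∀ i, Differentiable ℝ fun z => g z i := by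
    intro i
    rw [hgEq i]
    apply Differentiable.sub (hdR i)
    apply Differentiable.mul (hfR i)
    have hnum : Differentiable ℝ fun z =>
        ∑ j, (starRingEnd ℂ) (f z j) * deriv (fun w => f w j) z :=
      Differentiable.fun_sum fun j _ => (hfc j).mul (hdR j)
    have hden : Differentiable ℝ fun z => ∑ j, (starRingEnd ℂ) (f z j) * f z j :=
      Differentiable.fun_sum fun j _ => (hfc j).mul (hfR j)
    have : (fun z => (∑ j, (starRingEnd ℂ) (f z j) * deriv (fun w => f w j) z) /
        (∑ j, (starRingEnd ℂ) (f z j) * f z j)) = fun z =>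
        (∑ j, (starRingEnd ℂ) (f z j) * deriv (fun w => f w j) z) *
        (∑ j, (starRingEnd ℂ) (f z j) * f z j)⁻¹ := by
      funext z; rw [div_eq_mul_inv]
    rw [this]
    exact hnum.mul (hden.inv hBne)
  -- herm (f z) (g z) = 0 everywhere
  have h1 : ∀ z, herm (f z) (g z) = 0 := fun z => herm_Pp_self f z (hf0 z)
  -- wD of that function at ζ equals herm (f ζ) (wDV g ζ)
  have key : herm (f ζ) (wDV g ζ) = 0 := by
    have e1 : wD (fun z => herm (f z) (g z)) ζ = 0 := by
      have : (fun z => herm (f z) (g z)) = fun _ => (0 : ℂ) := funext h1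
      rw [this, wD_zero_fun]
    have e2 : wD (fun z => herm (f z) (g z)) ζ
        = ∑ i, wD (fun w => (starRingEnd ℂ) (f w i) * g w i) ζ := by
      exact wD_sum Finset.univ (fun i w => (starRingEnd ℂ) (f w i) * g w i) ζ
        (fun i _ => ((hfc i ζ).mul (hgd i ζ)))
    have e3 : ∀ i, wD (fun w => (starRingEnd ℂ) (f w i) * g w i) ζ
        = (starRingEnd ℂ) (f ζ i) * wD (fun w => g w i) ζ := by
      intro i
      rw [wD_mul _ _ ζ (hfc i ζ) (hgd i ζ), wD_conj, wDbar_eq_zero _ (hf i)]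
      simp
    calc herm (f ζ) (wDV g ζ)
        = ∑ i, wD (fun w => (starRingEnd ℂ) (f w i) * g w i) ζ := by
          simp only [herm, wDV, e3]
      _ = 0 := by rw [← e2, e1]
  -- conclude
  have h2 : herm (f ζ) (Pp g ζ) = 0 := by
    rw [herm_Pp_expand, key, h1 ζ, mul_zero, sub_zero]
  rw [herm_conj, h2, map_zero]
end
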